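/- The isotonic regression values satisfy the symmetry F^0_i(s'_1,...,s'_{k'}, w_1,...,w_{k'}, y'_1,...,y'_{k'}) = 1 - F^1_i(-s'_1,...,-s'_{k'}, w_1,...,w_{k'}, 1-y'_1,...,1-y'_{k'}), where F^1_i is the isotonic fit at s'_i after appending a test point with label 1 just to the left of s'_i, and F^0_i is the isotonic fit at s'_i after appending a test point with label 0 just to the right of s'_i. -/

import Mathlib

/-- The value at point `j` of the (weighted) isotonic regression fitted to
scores `s`, weights `w` and values `y`, via the standard minimax formula
`max_{a : s a ≤ s j} min_{b : s j ≤ s b} Av{y i : s a ≤ s i ≤ s b}`. -/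
noncomputable def isoVal {n : ℕ} (s w y : Fin n → ℝ) (j : Fin n) : ℝ :=
  (Finset.univ.filter (fun a => s a ≤ s j)).sup'
    ⟨j, by simp⟩
    (fun a =>
      (Finset.univ.filter (fun b => s j ≤ s b)).inf'
        ⟨j, by simp⟩
        (fun b =>
          (∑ i ∈ Finset.univ.filter (fun i => s a ≤ s i ∧ s i ≤ s b), w i * y i) /
          (∑ i ∈ Finset.univ.filter (fun i => s a ≤ s i ∧ s i ≤ s b), w i)))

/-!
Negating the scores and flipping the labels `y ↦ 1 - y` keeps every block of consecutive
scores but swaps its endpoints, and replaces each block average by `1` minus it. So the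
max–min formula for the flipped data is `1` minus the min–max formula for the original data,
and the symmetry reduces to the minimax identity `max_a min_b Av(a, b) = min_b max_a Av(a, b)`.
The nontrivial inequality holds because block sums of `w i * (y i - M)` are additive under
splitting a block, which lets one exchange the right endpoint of a block against the saddle
point `(a₀, b₀)` of the max–min.
-/

open Finset

theorem Finset.sup'_inf'_le_inf'_sup' {α β γ : Type*} [Lattice γ] {A : Finset α} {B : Finset β}
    (hA : A.Nonempty) (hB : B.Nonempty) (f : α → β → γ) :
    A.sup' hA (fun a => B.inf' hB (f a)) ≤ B.inf' hB (fun b => A.sup' hA (f · b)) :=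
  sup'_le _ _ fun _ ha => le_inf' _ _ fun _ hb =>
    (inf'_le _ hb).trans (le_sup' (f · _) ha)

theorem Finset.sup'_const_sub {α : Type*} {A : Finset α} (hA : A.Nonempty) (c : ℝ) (f : α → ℝ) :
    A.sup' hA (fun a => c - f a) = c - A.inf' hA f := by
  obtain ⟨a, ha, hmin⟩ := exists_mem_eq_inf' hA f
  exact le_antisymm (sup'_le _ _ fun b hb => by linarith [inf'_le f hb])
    (hmin ▸ le_sup' (fun a => c - f a) ha)

theorem Finset.inf'_const_sub {α : Type*} {A : Finset α} (hA : A.Nonempty) (c : ℝ) (f : α → ℝ) :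
    A.inf' hA (fun a => c - f a) = c - A.sup' hA f := by
  obtain ⟨a, ha, hmax⟩ := exists_mem_eq_sup' hA f
  exact le_antisymm (hmax ▸ inf'_le (fun a => c - f a) ha)
    (le_inf' _ _ fun b hb => by linarith [le_sup' f hb])

section Block

variable {ι α : Type*} [Fintype ι] [LinearOrder α]

def block (s : ι → α) (a b : ι) : Finset ι :=
  univ.filter fun i => s a ≤ s i ∧ s i ≤ s b

theorem mem_block {s : ι → α} {a b i : ι} : i ∈ block s a b ↔ s a ≤ s i ∧ s i ≤ s b := by
  simp [block]

theorem sum_block_eq_add {M : Type*} [AddCommMonoid M] (s : ι → α) (f : ι → M) {a b c : ι}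
    (hab : s a ≤ s b) (hbc : s b ≤ s c) :
    ∑ i ∈ block s a c, f i =
      ∑ i ∈ block s a b, f i + ∑ i ∈ univ.filter (fun i => s b < s i ∧ s i ≤ s c), f i := by
  classical
  rw [← sum_union]
  · congr 1
    ext i
    simp only [mem_union, mem_block, mem_filter, mem_univ, true_and]
    constructor
    · rintro ⟨hai, hic⟩
      exact (le_or_gt (s i) (s b)).imp (fun hib => ⟨hai, hib⟩) fun hbi => ⟨hbi, hic⟩
    · rintro (⟨hai, hib⟩ | ⟨hbi, hic⟩)
      exacts [⟨hai, hib.trans hbc⟩, ⟨hab.trans hbi.le, hic⟩]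
  · exact disjoint_left.mpr fun i hi hi' =>
      (mem_block.mp hi).2.not_gt (mem_filter.mp hi').2.1

variable (s : ι → α) (w y : ι → ℝ)

noncomputable def blockAvg (a b : ι) : ℝ :=
  (∑ i ∈ block s a b, w i * y i) / ∑ i ∈ block s a b, w i

variable {s w}

theorem sum_block_weight_pos (hw : ∀ i, 0 < w i) {a b j : ι} (ha : s a ≤ s j) (hb : s j ≤ s b) :
    0 < ∑ i ∈ block s a b, w i :=
  sum_pos (fun i _ => hw i) ⟨j, mem_block.mpr ⟨ha, hb⟩⟩

theorem blockAvg_le_iff {a b : ι} (hW : 0 < ∑ i ∈ block s a b, w i) (M : ℝ) :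
    blockAvg s w y a b ≤ M ↔ ∑ i ∈ block s a b, w i * (y i - M) ≤ 0 := by
  simp only [blockAvg, div_le_iff₀ hW, mul_sub, sum_sub_distrib, ← sum_mul, sub_nonpos,
    mul_comm M]

theorem le_blockAvg_iff {a b : ι} (hW : 0 < ∑ i ∈ block s a b, w i) (M : ℝ) :
    M ≤ blockAvg s w y a b ↔ 0 ≤ ∑ i ∈ block s a b, w i * (y i - M) := by
  simp only [blockAvg, le_div_iff₀ hW, mul_sub, sum_sub_distrib, ← sum_mul, sub_nonneg,
    mul_comm M]

theorem blockAvg_le_of_saddle (hw : ∀ i, 0 < w i) {M : ℝ} {j a a₀ b b₀ : ι}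
    (ha : s a ≤ s j) (ha₀ : s a₀ ≤ s j) (hb : s j ≤ s b) (hb₀ : s j ≤ s b₀)
    (hab : blockAvg s w y a b ≤ M) (ha₀b : M ≤ blockAvg s w y a₀ b)
    (ha₀b₀ : blockAvg s w y a₀ b₀ ≤ M) :
    blockAvg s w y a b₀ ≤ M := by
  -- Against the fixed level `M`, the averages become signs of sums that are additive in blocks.
  rw [blockAvg_le_iff y (sum_block_weight_pos hw ha hb)] at hab
  rw [le_blockAvg_iff y (sum_block_weight_pos hw ha₀ hb)] at ha₀b
  rw [blockAvg_le_iff y (sum_block_weight_pos hw ha₀ hb₀)] at ha₀b₀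
  rw [blockAvg_le_iff y (sum_block_weight_pos hw ha hb₀)]
  let excess := fun i => w i * (y i - M)
  rcases le_total (s b) (s b₀) with hbb₀ | hb₀b
  · have := sum_block_eq_add s excess (ha.trans hb) hbb₀
    have := sum_block_eq_add s excess (ha₀.trans hb) hbb₀
    linarith
  · have := sum_block_eq_add s excess (ha.trans hb₀) hb₀b
    have := sum_block_eq_add s excess (ha₀.trans hb₀) hb₀b
    linarith

end Block

section IsoVal

variable {n : ℕ} {s w : Fin n → ℝ} (y : Fin n → ℝ)

theorem isoVal_eq_inf'_sup' (hw : ∀ i, 0 < w i) (j : Fin n) :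
    isoVal s w y j =
      (univ.filter (fun b => s j ≤ s b)).inf' ⟨j, by simp⟩
        (fun b => (univ.filter (fun a => s a ≤ s j)).sup' ⟨j, by simp⟩
          (fun a => blockAvg s w y a b)) := by
  set A := univ.filter (fun a => s a ≤ s j)
  set B := univ.filter (fun b => s j ≤ s b)
  have hA : A.Nonempty := ⟨j, by simp [A]⟩
  have hB : B.Nonempty := ⟨j, by simp [B]⟩
  refine le_antisymm (sup'_inf'_le_inf'_sup' hA hB (blockAvg s w y)) ?_
  obtain ⟨a₀, ha₀, hM⟩ := exists_mem_eq_sup' hA fun a => B.inf' hB (blockAvg s w y a)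
  obtain ⟨b₀, hb₀, hMa₀⟩ := exists_mem_eq_inf' hB (blockAvg s w y a₀)
  have hsaddle : isoVal s w y j = blockAvg s w y a₀ b₀ := hM.trans hMa₀
  refine inf'_le_of_le _ hb₀ (sup'_le _ _ fun a ha => ?_)
  obtain ⟨b, hb, hMa⟩ := exists_mem_eq_inf' hB (blockAvg s w y a)
  rw [hsaddle]
  have hab : blockAvg s w y a b ≤ blockAvg s w y a₀ b₀ :=
    calc blockAvg s w y a b = B.inf' hB (blockAvg s w y a) := hMa.symm
      _ ≤ isoVal s w y j := le_sup' (fun a => B.inf' hB (blockAvg s w y a)) ha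
      _ = blockAvg s w y a₀ b₀ := hsaddle
  exact blockAvg_le_of_saddle y hw (mem_filter.mp ha).2 (mem_filter.mp ha₀).2
    (mem_filter.mp hb).2 (mem_filter.mp hb₀).2 hab (hMa₀ ▸ inf'_le _ hb) le_rfl

end IsoVal

theorem block_neg {ι : Type*} [Fintype ι] (s : ι → ℝ) (a b : ι) :
    block (fun i => -s i) a b = block s b a := by
  ext i
  simp only [mem_block, neg_le_neg_iff, and_comm]

theorem blockAvg_neg_one_sub {ι : Type*} [Fintype ι] {s w : ι → ℝ} (y : ι → ℝ) {a b : ι}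
    (hW : 0 < ∑ i ∈ block s b a, w i) :
    blockAvg (fun i => -s i) w (fun i => 1 - y i) a b = 1 - blockAvg s w y b a := by
  simp only [blockAvg, block_neg, mul_one_sub, sum_sub_distrib, sub_div, div_self hW.ne']

theorem isoVal_neg_one_sub {n : ℕ} {s w : Fin n → ℝ} (y : Fin n → ℝ) (hw : ∀ i, 0 < w i)
    (j : Fin n) :
    isoVal (fun i => -s i) w (fun i => 1 - y i) j = 1 - isoVal s w y j := by
  have hA : univ.filter (fun a => -s a ≤ -s j) = univ.filter (fun a => s j ≤ s a) := by
    simp only [neg_le_neg_iff]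
  have hB : univ.filter (fun b => -s j ≤ -s b) = univ.filter (fun b => s b ≤ s j) := by
    simp only [neg_le_neg_iff]
  rw [isoVal_eq_inf'_sup' y hw]
  refine (sup'_congr _ hA fun a ha => ?_).trans (sup'_const_sub _ _ _)
  refine (inf'_congr _ hB fun b hb => blockAvg_neg_one_sub y ?_).trans (inf'_const_sub _ _ _)
  exact sum_block_weight_pos hw (neg_le_neg_iff.mp (mem_filter.mp hb).2)
    (neg_le_neg_iff.mp (mem_filter.mp ha).2)

theorem stmt_19_general (k' : ℕ) (s' : Fin k' → ℝ)
    (w : Fin k' → ℝ) (hw : ∀ j, 0 < w j)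
    (y' : Fin k' → ℝ)
    (t : ℝ) :
    isoVal (Fin.snoc s' t) (Fin.snoc w 1) (Fin.snoc y' 0) (Fin.last k') =
      1 - isoVal (Fin.snoc (fun j => -(s' j)) (-t)) (Fin.snoc w 1)
            (Fin.snoc (fun j => 1 - y' j) 1) (Fin.last k') := by
  have hw' : ∀ i, 0 < (Fin.snoc w 1 : Fin (k' + 1) → ℝ) i :=
    Fin.lastCases (by simp) fun j => by simpa using hw j
  have hs : Fin.snoc (fun j => -s' j) (-t) = fun i => -(Fin.snoc s' t : Fin (k' + 1) → ℝ) i :=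
    (Fin.comp_snoc (fun x : ℝ => -x) s' t).symm
  have hy :
      Fin.snoc (fun j => 1 - y' j) 1 = fun i => 1 - (Fin.snoc y' 0 : Fin (k' + 1) → ℝ) i := by
    simpa [Function.comp_def] using (Fin.comp_snoc (fun x : ℝ => 1 - x) y' 0).symm
  rw [hs, hy, isoVal_neg_one_sub _ hw', sub_sub_cancel]

/-- Symmetry of the isotonic fits `F⁰` and `F¹`: appending a unit-weight test
point with label 0 just to the right of `s'ᵢ` gives the same fitted value at
the test point as `1` minus the fit obtained from the order-reversed
(negated) scores with flipped labels `y ↦ 1 - y` and the test point (now just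
to the left of `-s'ᵢ`) labelled 1. -/
theorem stmt_19 (k' : ℕ) (hk : 0 < k') (s' : Fin k' → ℝ) (hs' : StrictMono s')
    (w : Fin k' → ℝ) (hw : ∀ j, 0 < w j)
    (y' : Fin k' → ℝ) (hy' : ∀ j, y' j ∈ Set.Icc (0:ℝ) 1)
    (i : Fin k') (t : ℝ) (ht1 : s' i < t) (ht2 : ∀ j, s' i < s' j → t < s' j) :
    isoVal (Fin.snoc s' t) (Fin.snoc w 1) (Fin.snoc y' 0) (Fin.last k') =
      1 - isoVal (Fin.snoc (fun j => -(s' j)) (-t)) (Fin.snoc w 1)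
            (Fin.snoc (fun j => 1 - y' j) 1) (Fin.last k') :=
  stmt_19_general k' s' w hw y' t
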